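/- In a five-valued Nelson algebra, every irreducible deductive system is completely irreducible; hence the irreducible and completely irreducible deductive systems coincide. -/
import Mathlib


/-- A Nelson algebra: a distributive lattice (axioms N1, N2) with a De Morgan
involution `tilde` (N3, N4), the Kleene condition (N5), and a weak implication
`imp` satisfying (N6)-(N8). -/
class NelsonAlgebra (N : Type*) extends DistribLattice N where
  one : N
  tilde : N → N
  imp : N → N → N
  tilde_tilde : ∀ x : N, tilde (tilde x) = x
  tilde_sup : ∀ x y : N, tilde (x ⊔ y) = tilde x ⊓ tilde y
  kleene : ∀ x y : N, x ⊓ tilde x = (x ⊓ tilde x) ⊓ (y ⊔ tilde y)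
  imp_self : ∀ x : N, imp x x = one
  imp_imp : ∀ x y z : N, imp x (imp y z) = imp (x ⊓ y) z
  inf_imp : ∀ x y : N, x ⊓ imp x y = x ⊓ (tilde x ⊔ y)

open NelsonAlgebra

/-- A deductive system: contains 1 and is closed under modus ponens. -/
def IsDeductiveSystem {N : Type*} [NelsonAlgebra N] (D : Set N) : Prop :=
  NelsonAlgebra.one ∈ D ∧ ∀ x y : N, x ∈ D → imp x y ∈ D → y ∈ D

/-- A lattice filter: contains 1, upward closed, closed under meets. -/
def IsLatticeFilter {N : Type*} [NelsonAlgebra N] (F : Set N) : Prop :=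
  NelsonAlgebra.one ∈ F ∧ (∀ x y : N, x ∈ F → x ≤ y → y ∈ F) ∧
    ∀ x y : N, x ∈ F → y ∈ F → x ⊓ y ∈ F

/-- A prime filter: a proper lattice filter such that x ⊔ y ∈ F implies
x ∈ F or y ∈ F. -/
def IsPrimeFilter {N : Type*} [NelsonAlgebra N] (F : Set N) : Prop :=
  IsLatticeFilter F ∧ F ≠ Set.univ ∧ ∀ x y : N, x ⊔ y ∈ F → x ∈ F ∨ y ∈ F

/-- An irreducible deductive system. -/
def IsIrreducibleDS {N : Type*} [NelsonAlgebra N] (D : Set N) : Prop :=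
  IsDeductiveSystem D ∧ D ≠ Set.univ ∧
    ∀ D₁ D₂ : Set N, IsDeductiveSystem D₁ → IsDeductiveSystem D₂ →
      D = D₁ ∩ D₂ → D = D₁ ∨ D = D₂

/-- A completely irreducible deductive system: proper, and whenever it is an
intersection of a family of deductive systems it equals one of them. -/
def IsCompletelyIrreducibleDS {N : Type*} [NelsonAlgebra N] (D : Set N) : Prop :=
  IsDeductiveSystem D ∧ D ≠ Set.univ ∧
    ∀ S : Set (Set N), (∀ D' ∈ S, IsDeductiveSystem D') → D = ⋂₀ S → D ∈ S

/-- A maximal deductive system. -/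
def IsMaximalDS {N : Type*} [NelsonAlgebra N] (M : Set N) : Prop :=
  IsDeductiveSystem M ∧ M ≠ Set.univ ∧
    ∀ D : Set N, IsDeductiveSystem D → D ≠ Set.univ → M ⊆ D → M = D

section Aux
variable {N : Type*} [NelsonAlgebra N]

lemma nel_imp_self (x : N) : imp x x = one := NelsonAlgebra.imp_self x
lemma nel_imp_imp (x y z : N) : imp x (imp y z) = imp (x ⊓ y) z := NelsonAlgebra.imp_imp x y z
lemma nel_inf_imp (x y : N) : x ⊓ imp x y = x ⊓ (tilde x ⊔ y) := NelsonAlgebra.inf_imp x y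


lemma nel_imp_one_right (y : N) : imp y one = one := by
  have h : imp y (imp y y) = imp y y := by rw [nel_imp_imp, inf_idem]
  rw [nel_imp_self] at h
  exact h

lemma nel_K (x y : N) : imp (x ⊓ y) y = one := by
  rw [← nel_imp_imp, nel_imp_self, nel_imp_one_right]

lemma nel_imp_of_le {x y : N} (h : x ≤ y) : imp x y = one := by
  have hx : x ⊓ y = x := inf_eq_left.mpr h
  calc imp x y = imp (x ⊓ y) y := by rw [hx]
    _ = one := nel_K x y

lemma nel_C1 {x y : N} (h : x ≤ tilde x ⊔ y) : imp x y = one := by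
  have h1 : x ⊓ imp x y = x := by rw [nel_inf_imp]; exact inf_eq_left.mpr h
  have h2 : x ≤ imp x y := inf_eq_left.mp h1
  have h3 : imp x (imp x y) = one := nel_imp_of_le h2
  rw [nel_imp_imp, inf_idem] at h3
  exact h3

lemma nel_tilde_antitone {x y : N} (h : x ≤ y) : tilde y ≤ tilde x := by
  have hs : x ⊔ y = y := sup_eq_right.mpr h
  calc tilde y = tilde (x ⊔ y) := by rw [hs]
    _ = tilde x ⊓ tilde y := tilde_sup x y
    _ ≤ tilde x := inf_le_left

lemma nel_tilde_inf (x y : N) : tilde (x ⊓ y) = tilde x ⊔ tilde y := by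
  have h := tilde_sup (tilde x) (tilde y)
  rw [tilde_tilde, tilde_tilde] at h
  rw [← h, tilde_tilde]

lemma nel_kleene_le (x y : N) : x ⊓ tilde x ≤ y ⊔ tilde y := by
  rw [kleene x y]
  exact inf_le_right

lemma nel_I1 (x y z : N) : imp (imp x y ⊓ imp y z ⊓ x) z = one := by
  apply nel_C1
  set E := imp x y ⊓ imp y z ⊓ x with hEdef
  have hEx : E ≤ x := inf_le_right
  have hEA : E ≤ imp x y := le_trans inf_le_left inf_le_left
  have hEB : E ≤ imp y z := le_trans inf_le_left inf_le_right
  have htx : tilde x ≤ tilde E := nel_tilde_antitone hEx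
  have hkey : E ≤ x ⊓ (tilde x ⊔ y) := by
    rw [← nel_inf_imp]; exact le_inf hEx hEA
  have hty : x ⊓ tilde y ≤ tilde E := by
    have h := nel_tilde_antitone hkey
    rw [nel_tilde_inf, tilde_sup, tilde_tilde] at h
    exact le_trans le_sup_right h
  have hstep : E ≤ ((x ⊓ tilde x) ⊔ (x ⊓ y)) ⊓ imp y z := by
    refine le_inf ?_ hEB
    calc E ≤ x ⊓ (tilde x ⊔ y) := hkey
      _ = (x ⊓ tilde x) ⊔ (x ⊓ y) := by rw [inf_sup_left]
  have hyB : (x ⊓ y) ⊓ imp y z ≤ (x ⊓ (y ⊓ tilde y)) ⊔ (x ⊓ (y ⊓ z)) :=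
    le_of_eq (by rw [inf_assoc, nel_inf_imp, inf_sup_left, inf_sup_left])
  calc E ≤ ((x ⊓ tilde x) ⊔ (x ⊓ y)) ⊓ imp y z := hstep
    _ = (x ⊓ tilde x) ⊓ imp y z ⊔ (x ⊓ y) ⊓ imp y z := by rw [inf_sup_right]
    _ ≤ tilde E ⊔ z := by
        apply sup_le
        · exact le_sup_of_le_left (le_trans inf_le_left (le_trans inf_le_right htx))
        · refine le_trans hyB (sup_le ?_ ?_)
          · exact le_sup_of_le_left (le_trans (inf_le_inf_left x inf_le_right) hty)
          · exact le_sup_of_le_right (le_trans inf_le_right inf_le_right)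

lemma nel_I2 (a x y : N) : imp (imp a x ⊓ imp (a ⊓ x) y ⊓ a) y = one := by
  apply nel_C1
  set E := imp a x ⊓ imp (a ⊓ x) y ⊓ a with hEdef
  have hEa : E ≤ a := inf_le_right
  have hEA : E ≤ imp a x := le_trans inf_le_left inf_le_left
  have hEB : E ≤ imp (a ⊓ x) y := le_trans inf_le_left inf_le_right
  have hta : tilde a ≤ tilde E := nel_tilde_antitone hEa
  have hkey : E ≤ a ⊓ (tilde a ⊔ x) := by
    rw [← nel_inf_imp]; exact le_inf hEa hEA
  have htx : a ⊓ tilde x ≤ tilde E := by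
    have h := nel_tilde_antitone hkey
    rw [nel_tilde_inf, tilde_sup, tilde_tilde] at h
    exact le_trans le_sup_right h
  have hstep : E ≤ ((a ⊓ tilde a) ⊔ (a ⊓ x)) ⊓ imp (a ⊓ x) y := by
    refine le_inf ?_ hEB
    calc E ≤ a ⊓ (tilde a ⊔ x) := hkey
      _ = (a ⊓ tilde a) ⊔ (a ⊓ x) := by rw [inf_sup_left]
  have hpB : (a ⊓ x) ⊓ imp (a ⊓ x) y ≤ ((a ⊓ x) ⊓ tilde (a ⊓ x)) ⊔ ((a ⊓ x) ⊓ y) := by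
    rw [nel_inf_imp, inf_sup_left]
  have hpt : (a ⊓ x) ⊓ tilde (a ⊓ x) ≤ tilde E := by
    rw [nel_tilde_inf, inf_sup_left]
    apply sup_le
    · exact le_trans inf_le_right hta
    · exact le_trans (inf_le_inf_right (tilde x) inf_le_left) htx
  calc E ≤ ((a ⊓ tilde a) ⊔ (a ⊓ x)) ⊓ imp (a ⊓ x) y := hstep
    _ = (a ⊓ tilde a) ⊓ imp (a ⊓ x) y ⊔ (a ⊓ x) ⊓ imp (a ⊓ x) y := by rw [inf_sup_right]
    _ ≤ tilde E ⊔ y := by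
        apply sup_le
        · exact le_sup_of_le_left (le_trans inf_le_left (le_trans inf_le_right hta))
        · refine le_trans hpB (sup_le ?_ ?_)
          · exact le_sup_of_le_left hpt
          · exact le_sup_of_le_right inf_le_right

lemma nel_aux3 (x y z : N) : imp x z ⊓ imp y z ⊓ x ≤ tilde (x ⊔ y) ⊔ z := by
  have hxA : imp x z ⊓ imp y z ⊓ x ≤ (x ⊓ (tilde x ⊔ z)) ⊓ imp y z := by
    rw [← nel_inf_imp]
    exact le_inf (le_inf inf_le_right (le_trans inf_le_left inf_le_left))
      (le_trans inf_le_left inf_le_right)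
  refine le_trans hxA ?_
  rw [inf_sup_left, inf_sup_right]
  apply sup_le
  · have hk : (x ⊓ tilde x) ⊓ imp y z ≤ (y ⊔ tilde y) ⊓ ((x ⊓ tilde x) ⊓ imp y z) :=
      le_inf (le_trans inf_le_left (nel_kleene_le x y)) le_rfl
    refine le_trans hk ?_
    rw [inf_sup_right]
    apply sup_le
    · have h1 : y ⊓ ((x ⊓ tilde x) ⊓ imp y z) ≤ (x ⊓ tilde x) ⊓ (y ⊓ imp y z) :=
        le_inf (le_trans inf_le_right inf_le_left)
          (le_inf inf_le_left (le_trans inf_le_right inf_le_right))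
      refine le_trans h1 ?_
      rw [nel_inf_imp, inf_sup_left, inf_sup_left]
      apply sup_le
      · refine le_sup_of_le_left ?_
        rw [tilde_sup]
        exact le_inf (le_trans inf_le_left inf_le_right) (le_trans inf_le_right inf_le_right)
      · exact le_sup_of_le_right (le_trans inf_le_right inf_le_right)
    · refine le_sup_of_le_left ?_
      rw [tilde_sup]
      exact le_inf (le_trans inf_le_right (le_trans inf_le_left inf_le_right)) inf_le_left
  · exact le_sup_of_le_right (le_trans inf_le_left inf_le_right)

lemma nel_I3 (x y z : N) : imp (imp x z ⊓ imp y z ⊓ (x ⊔ y)) z = one := by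
  apply nel_C1
  set E := imp x z ⊓ imp y z ⊓ (x ⊔ y) with hEdef
  have hExy : E ≤ x ⊔ y := inf_le_right
  have ht : tilde (x ⊔ y) ≤ tilde E := nel_tilde_antitone hExy
  have hsplit : E ≤ (imp x z ⊓ imp y z ⊓ x) ⊔ (imp x z ⊓ imp y z ⊓ y) :=
    le_of_eq (by rw [hEdef, inf_sup_left])
  refine le_trans hsplit (sup_le ?_ ?_)
  · exact le_trans (nel_aux3 x y z) (sup_le (le_sup_of_le_left ht) le_sup_right)
  · have h2 : imp x z ⊓ imp y z ⊓ y ≤ tilde (y ⊔ x) ⊔ z := by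
      refine le_trans ?_ (nel_aux3 y x z)
      exact le_inf (le_inf (le_trans inf_le_left inf_le_right)
        (le_trans inf_le_left inf_le_left)) inf_le_right
    refine le_trans h2 ?_
    rw [sup_comm y x]
    exact sup_le (le_sup_of_le_left ht) le_sup_right

lemma nel_at_elt {y y' : N} (x : N) (h : y ≤ y') : imp (imp y' x) (imp y x) = one := by
  rw [nel_imp_imp]
  apply nel_C1
  have hE1 : imp y' x ⊓ y ≤ y := inf_le_right
  have hty : tilde y' ≤ tilde (imp y' x ⊓ y) :=
    le_trans (nel_tilde_antitone h) (nel_tilde_antitone hE1)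
  have hdec : imp y' x ⊓ y ≤ (y' ⊓ tilde y') ⊔ (y' ⊓ x) := by
    have h1 : imp y' x ⊓ y ≤ y' ⊓ imp y' x :=
      le_inf (le_trans inf_le_right h) inf_le_left
    rw [nel_inf_imp, inf_sup_left] at h1
    exact h1
  refine le_trans hdec (sup_le ?_ ?_)
  · exact le_sup_of_le_left (le_trans inf_le_right hty)
  · exact le_sup_of_le_right inf_le_right

end Aux

section DS
variable {N : Type*} [NelsonAlgebra N] {D : Set N}

lemma ds_mp (hD : IsDeductiveSystem D) {x y : N} (hx : x ∈ D) (hxy : imp x y ∈ D) :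
    y ∈ D := hD.2 x y hx hxy

lemma ds_inf (hD : IsDeductiveSystem D) {x y : N} (hx : x ∈ D) (hy : y ∈ D) :
    x ⊓ y ∈ D := by
  have h : imp x (imp y (x ⊓ y)) = one := by rw [nel_imp_imp, nel_imp_self]
  have h1 : imp y (x ⊓ y) ∈ D := ds_mp hD hx (by rw [h]; exact hD.1)
  exact ds_mp hD hy h1

lemma ds_trans (hD : IsDeductiveSystem D) {x y z : N}
    (h1 : imp x y ∈ D) (h2 : imp y z ∈ D) : imp x z ∈ D := by
  refine ds_mp hD (ds_inf hD h1 h2) ?_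
  have helt : imp (imp x y ⊓ imp y z) (imp x z) = one := by
    rw [nel_imp_imp]; exact nel_I1 x y z
  rw [helt]; exact hD.1

lemma ds_join (hD : IsDeductiveSystem D) {x y z : N}
    (h1 : imp x z ∈ D) (h2 : imp y z ∈ D) : imp (x ⊔ y) z ∈ D := by
  refine ds_mp hD (ds_inf hD h1 h2) ?_
  have helt : imp (imp x z ⊓ imp y z) (imp (x ⊔ y) z) = one := by
    rw [nel_imp_imp]; exact nel_I3 x y z
  rw [helt]; exact hD.1

lemma ds_at1 (hD : IsDeductiveSystem D) {a b c : N} (h : imp a b ∈ D) :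
    imp (imp b c) (imp a c) ∈ D := by
  refine ds_mp hD h ?_
  have helt : imp (imp a b) (imp (imp b c) (imp a c)) = one := by
    rw [nel_imp_imp, nel_imp_imp]; exact nel_I1 a b c
  rw [helt]; exact hD.1

lemma ds_imp_weak (hD : IsDeductiveSystem D) {t : N} (ht : t ∈ D) (a : N) :
    imp a t ∈ D := by
  refine ds_mp hD ht ?_
  have helt : imp t (imp a t) = one := by
    rw [nel_imp_imp, inf_comm t a]; exact nel_K a t
  rw [helt]; exact hD.1

lemma ds_Da (hD : IsDeductiveSystem D) (a : N) :
    IsDeductiveSystem {t : N | imp a t ∈ D} := by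
  constructor
  · show imp a one ∈ D
    rw [nel_imp_one_right]; exact hD.1
  · intro x y hx hy
    have hx' : imp a x ∈ D := hx
    have hy' : imp (a ⊓ x) y ∈ D := by
      have : imp a (imp x y) ∈ D := hy
      rwa [nel_imp_imp] at this
    show imp a y ∈ D
    refine ds_mp hD (ds_inf hD hx' hy') ?_
    have helt : imp (imp a x ⊓ imp (a ⊓ x) y) (imp a y) = one := by
      rw [nel_imp_imp]; exact nel_I2 a x y
    rw [helt]; exact hD.1

lemma ds_prime (hirr : IsIrreducibleDS D) {a b : N} (ha : a ∉ D) (hb : b ∉ D) :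
    a ⊔ b ∉ D := by
  intro hab
  have hD := hirr.1
  have heq : D = {t : N | imp a t ∈ D} ∩ {t : N | imp b t ∈ D} := by
    apply Set.Subset.antisymm
    · intro t ht
      exact ⟨ds_imp_weak hD ht a, ds_imp_weak hD ht b⟩
    · rintro t ⟨h1, h2⟩
      exact ds_mp hD hab (ds_join hD h1 h2)
  rcases hirr.2.2 _ _ (ds_Da hD a) (ds_Da hD b) heq with h | h
  · apply ha; rw [h]; show imp a a ∈ D; rw [nel_imp_self]; exact hD.1
  · apply hb; rw [h]; show imp b b ∈ D; rw [nel_imp_self]; exact hD.1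

lemma ds_R1 (hD : IsDeductiveSystem D)
    (h5 : ∀ x y z : N, imp (imp (imp x z) y) (imp (imp (imp y x) y) y) = one)
    {v u e : N} (h : imp (imp v u) e ∈ D) : imp (imp (imp e v) e) e ∈ D := by
  refine ds_mp hD h ?_
  rw [h5 v e u]; exact hD.1

lemma ds_inner (hirr : IsIrreducibleDS D)
    (h5 : ∀ x y z : N, imp (imp (imp x z) y) (imp (imp (imp y x) y) y) = one)
    {ε v : N} (hε : ε ∉ D) (hg : imp ε v ∉ D)
    (hP1 : imp (imp (imp ε v) ε) ε ∈ D) : False := by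
  have hD := hirr.1
  have hε₂ : ε ⊔ imp ε v ∉ D := ds_prime hirr hε hg
  have hii : imp (imp (ε ⊔ imp ε v) ε) ε ∈ D := by
    refine ds_trans hD ?_ hP1
    rw [nel_at_elt ε (le_sup_right : imp ε v ≤ ε ⊔ imp ε v)]; exact hD.1
  have hQ2 : imp (imp (imp (ε ⊔ imp ε v) ε) (ε ⊔ imp ε v)) (ε ⊔ imp ε v) ∈ D := by
    refine ds_R1 hD h5 (v := ε) (u := v) ?_
    rw [nel_imp_of_le (le_sup_right : imp ε v ≤ ε ⊔ imp ε v)]; exact hD.1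
  have hQD : imp (imp (ε ⊔ imp ε v) ε) (ε ⊔ imp ε v) ∈ D := by
    refine ds_mp hD ?_ (ds_at1 hD (c := ε ⊔ imp ε v) hii)
    rw [nel_imp_of_le (le_sup_left : ε ≤ ε ⊔ imp ε v)]; exact hD.1
  exact hε₂ (ds_mp hD hQD hQ2)

lemma ds_CF (hirr : IsIrreducibleDS D)
    (h5 : ∀ x y z : N, imp (imp (imp x z) y) (imp (imp (imp y x) y) y) = one)
    {u v w : N} (hvu : imp v u ∉ D) (hwv : imp w v ∉ D) (hw : w ∉ D) : False := by
  have hD := hirr.1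
  have hε : imp v u ⊔ w ∉ D := ds_prime hirr hvu hw
  have hg : imp (imp v u ⊔ w) v ∉ D := by
    intro hgD
    apply hwv
    refine ds_trans hD ?_ hgD
    rw [nel_imp_of_le (le_sup_right : w ≤ imp v u ⊔ w)]; exact hD.1
  have hP1 : imp (imp (imp (imp v u ⊔ w) v) (imp v u ⊔ w)) (imp v u ⊔ w) ∈ D := by
    refine ds_R1 hD h5 (v := v) (u := u) ?_
    rw [nel_imp_of_le (le_sup_left : imp v u ≤ imp v u ⊔ w)]; exact hD.1
  exact ds_inner hirr h5 hε hg hP1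

lemma exists_m (hirr : IsIrreducibleDS D)
    (h5 : ∀ x y z : N, imp (imp (imp x z) y) (imp (imp (imp y x) y) y) = one) :
    ∃ m, m ∉ D ∧ ∀ b ∉ D, imp b m ∈ D := by
  have hD := hirr.1
  obtain ⟨a, ha⟩ := (Set.ne_univ_iff_exists_notMem D).mp hirr.2.1
  by_cases hc : ∀ b ∉ D, imp b a ∈ D
  · exact ⟨a, ha, hc⟩
  push_neg at hc
  obtain ⟨b₀, hb₀, hb₀a⟩ := hc
  refine ⟨a ⊔ b₀, ds_prime hirr ha hb₀, ?_⟩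
  intro b hb
  have he : b ⊔ (a ⊔ b₀) ∉ D := ds_prime hirr hb (ds_prime hirr ha hb₀)
  have hem : imp (b ⊔ (a ⊔ b₀)) (a ⊔ b₀) ∈ D := by
    by_contra hem
    refine ds_CF hirr h5 (u := a) (v := a ⊔ b₀) (w := b ⊔ (a ⊔ b₀)) ?_ hem he
    intro hma
    apply hb₀a
    refine ds_trans hD ?_ hma
    rw [nel_imp_of_le (le_sup_right : b₀ ≤ a ⊔ b₀)]; exact hD.1
  refine ds_trans hD ?_ hem
  rw [nel_imp_of_le (le_sup_left : b ≤ b ⊔ (a ⊔ b₀))]; exact hD.1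

end DS

theorem irreducible_eq_completelyIrreducible {N : Type*} [NelsonAlgebra N]
    (h5 : ∀ x y z : N,
      imp (imp (imp x z) y) (imp (imp (imp y x) y) y) = NelsonAlgebra.one) :
    (∀ D : Set N, IsIrreducibleDS D → IsCompletelyIrreducibleDS D) ∧
    {D : Set N | IsIrreducibleDS D} =
      {D : Set N | IsCompletelyIrreducibleDS D} := by
  have main : ∀ D : Set N, IsIrreducibleDS D → IsCompletelyIrreducibleDS D := by
    intro D hirr
    refine ⟨hirr.1, hirr.2.1, ?_⟩
    intro S hS hInt
    obtain ⟨m, hm, hmall⟩ := exists_m hirr h5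
    by_contra hDS
    apply hm
    have hmem : m ∈ ⋂₀ S := by
      intro E hE
      have hsub : D ⊆ E := by rw [hInt]; exact Set.sInter_subset_of_mem hE
      have hneq : D ≠ E := fun h => hDS (by rw [h]; exact hE)
      obtain ⟨b, hbE, hbD⟩ := Set.exists_of_ssubset (ssubset_iff_subset_ne.mpr ⟨hsub, hneq⟩)
      exact (hS E hE).2 b m hbE (hsub (hmall b hbD))
    rw [hInt]; exact hmem
  refine ⟨main, ?_⟩
  ext D
  simp only [Set.mem_setOf_eq]
  constructor
  · exact main D
  · rintro ⟨hDS, hne, h⟩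
    refine ⟨hDS, hne, ?_⟩
    intro D₁ D₂ h1 h2 heq
    have hmem : D ∈ ({D₁, D₂} : Set (Set N)) := by
      apply h
      · intro E hE
        simp only [Set.mem_insert_iff, Set.mem_singleton_iff] at hE
        rcases hE with rfl | rfl
        exacts [h1, h2]
      · rw [Set.sInter_pair]; exact heq
    simpa using hmem
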